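/- Given a refutation soup Z for φ in which every disjudgment except the initial one answers some question asked in Z, together with an addressing of Z, the model M constructed from Z (selecting syntax atoms according to φ, environment and goal atoms according to the judgments, question and answer atoms according to the soup structure, Y-atoms whenever some corresponding answer atom is selected, and not selecting F) is a stable model of the program P. -/

import Mathlib

/-!
The selected atoms are closed under the Gelfond–Lifschitz reduct clause by clause: the choice
clauses hold because `E`/`Ē` and `Aᵢ`/`Āᵢ` are selected complementarily, the propagation
clauses because an answer's environment contains that of the question it answers, the goal
constraints because each address carries one judgment, and the totality constraints because every
question asked in the soup has an answer in it, which selects the corresponding `Y` atom.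

Conversely every selected atom is derivable in the reduct. `E`, `Ē` are heads of choice clauses
whose negative bodies hold. The goal atom at `ξ` is derived by induction on the depth `d ξ`: `ξ` is
either `0…0`, a fact, or answers a question asked at a shallower `ζ`, whose goal atom yields the
question atom, then the answer atom `Aᵢ`, which fires goal propagation into `ξ`. The remaining atoms
`Q`, `Aᵢ`, `Āᵢ`, `Y` follow from the goal atom at their own address.
-/
namespace ASP

/-- A ground clause `head ← pos, ¬neg` of an answer set program. -/
structure GClause (α : Type) where
  head : α
  pos : List α
  neg : List α

variable {α : Type}

/-- Immediate-consequence operator of the Gelfond–Lifschitz reduct `P^M`: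
`F(I) = I ∪ {a | some clause a ← a₁,…,aₙ of P^M has all aᵢ ∈ I}`. -/
def tcons (P : Set (GClause α)) (M : Set α) : Set α →o Set α where
  toFun I := I ∪ {a | ∃ c ∈ P, c.head = a ∧ (∀ b ∈ c.pos, b ∈ I) ∧ (∀ b ∈ c.neg, b ∉ M)}
  monotone' := by
    intro I J h x hx
    rcases hx with hx | ⟨c, hc, h1, h2, h3⟩
    · exact Or.inl (h hx)
    · exact Or.inr ⟨c, hc, h1, fun b hb => h (h2 b hb), h3⟩

/-- The interpretation `I(P,M)`: least fixed point of the immediate-consequence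
operator of the reduct `P^M`. -/
def interp (P : Set (GClause α)) (M : Set α) : Set α := OrderHom.lfp (tcons P M)

/-- `M` is a stable model (answer set) of `P` iff `M = I(P,M)`. -/
def IsStable (P : Set (GClause α)) (M : Set α) : Prop := M = interp P M

end ASP
namespace MFOL

/-- Formulas of minimal first-order logic (→ and ∀ only, no function symbols),
in de Bruijn representation; individual terms are just variables `ℕ`. -/
inductive Form where
  | atom : ℕ → List ℕ → Form
  | imp : Form → Form → Form
  | all : Form → Form
deriving DecidableEq

def upRen (σ : ℕ → ℕ) : ℕ → ℕ
  | 0 => 0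
  | n + 1 => σ n + 1

/-- Capture-avoiding (simultaneous) substitution of variables for variables. -/
def substF : (ℕ → ℕ) → Form → Form
  | σ, .atom p args => .atom p (args.map σ)
  | σ, .imp a b => .imp (substF σ a) (substF σ b)
  | σ, .all a => .all (substF (upRen σ) a)

/-- Substitution of the variable `x` for the outermost bound variable. -/
def subst0 (x : ℕ) : Form → Form :=
  substF (fun n => match n with | 0 => x | n + 1 => n)

def shiftF : Form → Form := substF Nat.succ

/-- Natural deduction for minimal first-order logic. -/
inductive Prv : Set Form → Form → Prop
  | ax {Γ : Set Form} {φ : Form} : φ ∈ Γ → Prv Γ φ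
  | impI {Γ : Set Form} {φ ψ : Form} : Prv (insert φ Γ) ψ → Prv Γ (.imp φ ψ)
  | impE {Γ : Set Form} {φ ψ : Form} : Prv Γ (.imp φ ψ) → Prv Γ φ → Prv Γ ψ
  | allI {Γ : Set Form} {φ : Form} : Prv (shiftF '' Γ) φ → Prv Γ (.all φ)
  | allE {Γ : Set Form} {φ : Form} (x : ℕ) : Prv Γ (.all φ) → Prv Γ (subst0 x φ)

mutual
  /-- The Σ₁ class of the Mints hierarchy: Σ₁ ::= a | Π₁ → Σ₁. -/
  inductive IsSigma1 : Form → Prop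
    | atom (p : ℕ) (args : List ℕ) : IsSigma1 (.atom p args)
    | imp {τ σ : Form} : IsPi1 τ → IsSigma1 σ → IsSigma1 (.imp τ σ)
  /-- The Π₁ class of the Mints hierarchy: Π₁ ::= a | Σ₁ → Π₁ | ∀x.Π₁. -/
  inductive IsPi1 : Form → Prop
    | atom (p : ℕ) (args : List ℕ) : IsPi1 (.atom p args)
    | imp {σ π : Form} : IsSigma1 σ → IsPi1 π → IsPi1 (.imp σ π)
    | all {π : Form} : IsPi1 π → IsPi1 (.all π)
end

def IsAtomF (f : Form) : Prop := ∃ p args, f = Form.atom p args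

/-- Premises τ₁,…,τ_q of a Σ₁ formula τ₁ → ⋯ → τ_q → c. -/
def premsOf : Form → List Form
  | .imp a b => a :: premsOf b
  | .atom p args => []
  | .all a => []

/-- Target atom of a Σ₁ formula. -/
def targetOf : Form → Form
  | .imp _ b => targetOf b
  | f => f

/-- `Unfolds ψ prems b` : instantiating the ∀-blocks of the Π₁ formula
`ψ = ∀ȳ₁(σ₁ → ∀ȳ₂(σ₂ → ⋯ → ∀ȳ_k(σ_k → b')⋯))` at some variables x̄
yields the list of (instantiated) premises `prems = [σ₁[ȳ:=x̄],…]` and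
the (instantiated) target atom `b = b'[ȳ:=x̄]`. -/
inductive Unfolds : Form → List Form → Form → Prop
  | atom (p : ℕ) (args : List ℕ) : Unfolds (.atom p args) [] (.atom p args)
  | imp {σ ψ : Form} {prems : List Form} {b : Form} :
      Unfolds ψ prems b → Unfolds (.imp σ ψ) (σ :: prems) b
  | all {ψ : Form} {prems : List Form} {b : Form} (x : ℕ) :
      Unfolds (subst0 x ψ) prems b → Unfolds (.all ψ) prems b

/-- `closedAt k φ`: all free de Bruijn indices of `φ` are `< k`. -/
def closedAt : ℕ → Form → Prop
  | k, .atom _ args => ∀ x ∈ args, x < k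
  | k, .imp a b => closedAt k a ∧ closedAt k b
  | k, .all a => closedAt (k + 1) a

end MFOL
namespace MFOL

/-- Subformula relation. -/
inductive SubfOf : Form → Form → Prop
  | refl (φ : Form) : SubfOf φ φ
  | impL {χ a b : Form} : SubfOf χ a → SubfOf χ (.imp a b)
  | impR {χ a b : Form} : SubfOf χ b → SubfOf χ (.imp a b)
  | all {χ a : Form} : SubfOf χ a → SubfOf χ (.all a)

/-- Substitution instances of Π₁ subformulas of φ. -/
def Insts (φ : Form) : Set Form :=
  {τ | ∃ ψ, SubfOf ψ φ ∧ IsPi1 ψ ∧ ∃ σ : ℕ → ℕ, τ = substF σ ψ}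

/-- An i-th answer in `Z` to the question challenging premise `σ`
asked at a disjudgment with environment `Γ`. -/
def IsAnswerOf (Z : Set (Set Form × Form)) (Γ : Set Form) (σ : Form) : Prop :=
  ∃ z ∈ Z, z.2 = targetOf σ ∧ Γ ∪ {τ | τ ∈ premsOf σ} ⊆ z.1

/-- A refutation soup for φ: a set of disjudgments `Γ ⊬ a` containing the
initial disjudgment (the decomposition of φ) and such that every question
asked at a member of `Z` has some i-th answer in `Z`. -/
def IsSoup (φ : Form) (Z : Set (Set Form × Form)) : Prop :=
  ({τ | τ ∈ premsOf φ}, targetOf φ) ∈ Z ∧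
  (∀ z ∈ Z, z.1 ⊆ Insts φ ∧ IsAtomF z.2) ∧
  (∀ z ∈ Z, ∀ ψ ∈ z.1, ∀ prems, Unfolds ψ prems z.2 → ∃ σ ∈ prems, IsAnswerOf Z z.1 σ)

/-- Length of a formula. -/
def fsize : Form → ℕ
  | .atom _ args => 1 + args.length
  | .imp a b => fsize a + fsize b + 1
  | .all a => fsize a + 1

/-- Maximal arity of a predicate occurring in a formula. -/
def maxAr : Form → ℕ
  | .atom _ args => args.length
  | .imp a b => max (maxAr a) (maxAr b)
  | .all a => maxAr a

end MFOL
namespace MFOL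

/-- Addresses: bit vectors (of length `n^r`). -/
abbrev Addr := List Bool

def addrLen (φ : Form) : ℕ := fsize φ ^ maxAr φ

def addr0 (φ : Form) : Addr := List.replicate (addrLen φ) false

def AddrOk (φ : Form) (ξ : Addr) : Prop := ξ.length = addrLen φ

/-- Atoms of the answer-set program constructed from φ. -/
inductive PAt where
  | G : Form → Addr → PAt
  | E : Form → Addr → PAt
  | Ebar : Form → Addr → PAt
  | Q : Form → List Form → Form → Addr → PAt
  | A : ℕ → Form → List Form → Form → Addr → Addr → PAt
  | Abar : ℕ → Form → List Form → Form → Addr → Addr → PAt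
  | Y : Form → List Form → Form → Addr → PAt
  | F : PAt

/-- Syntactic correctness of a question datum: ψ is an instance of a Π₁
subformula of φ and unfolds to the premises `prems` and target `tgt`. -/
def QOk (φ ψ : Form) (prems : List Form) (tgt : Form) : Prop :=
  ψ ∈ Insts φ ∧ Unfolds ψ prems tgt

/-- The clauses of the answer-set program constructed from φ
('refutations into programs'): initialization facts at address 0…0,
answer-propagation clauses for environments and goals, choice clauses for
E/Ē and Aᵢ/Āᵢ, the question clause, totality clauses via Y and F, and
goal-uniqueness constraints. -/
inductive InSoupProg (φ : Form) : ASP.GClause PAt → Prop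
  | initG : InSoupProg φ ⟨.G (targetOf φ) (addr0 φ), [], []⟩
  | initE {ψ} : ψ ∈ premsOf φ → InSoupProg φ ⟨.E ψ (addr0 φ), [], []⟩
  | initEbar {ψ} : ψ ∈ Insts φ → ψ ∉ premsOf φ →
      InSoupProg φ ⟨.Ebar ψ (addr0 φ), [], []⟩
  | propE {i ψ prems tgt ξ η τ} : AddrOk φ ξ → AddrOk φ η → QOk φ ψ prems tgt →
      τ ∈ Insts φ →
      InSoupProg φ ⟨.E τ η, [.A i ψ prems tgt ξ η, .E τ ξ], []⟩
  | propD {i ψ prems tgt ξ η σ τ} : AddrOk φ ξ → AddrOk φ η → QOk φ ψ prems tgt →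
      prems[i]? = some σ → τ ∈ premsOf σ →
      InSoupProg φ ⟨.E τ η, [.A i ψ prems tgt ξ η], []⟩
  | propG {i ψ prems tgt ξ η σ} : AddrOk φ ξ → AddrOk φ η → QOk φ ψ prems tgt →
      prems[i]? = some σ →
      InSoupProg φ ⟨.G (targetOf σ) η, [.A i ψ prems tgt ξ η], []⟩
  | choiceE {ψ ξ} : ψ ∈ Insts φ → AddrOk φ ξ →
      InSoupProg φ ⟨.E ψ ξ, [], [.Ebar ψ ξ]⟩
  | choiceEbar {ψ ξ} : ψ ∈ Insts φ → AddrOk φ ξ →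
      InSoupProg φ ⟨.Ebar ψ ξ, [], [.E ψ ξ]⟩
  | conflE {ψ ξ} : ψ ∈ Insts φ → AddrOk φ ξ →
      InSoupProg φ ⟨.F, [.E ψ ξ, .Ebar ψ ξ], [.F]⟩
  | choiceA {i ψ prems tgt ξ η} : AddrOk φ ξ → AddrOk φ η → QOk φ ψ prems tgt →
      i < prems.length →
      InSoupProg φ ⟨.A i ψ prems tgt ξ η, [.Q ψ prems tgt ξ], [.Abar i ψ prems tgt ξ η]⟩
  | choiceAbar {i ψ prems tgt ξ η} : AddrOk φ ξ → AddrOk φ η → QOk φ ψ prems tgt →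
      i < prems.length →
      InSoupProg φ ⟨.Abar i ψ prems tgt ξ η, [.Q ψ prems tgt ξ], [.A i ψ prems tgt ξ η]⟩
  | quest {ψ prems tgt ξ} : AddrOk φ ξ → QOk φ ψ prems tgt →
      InSoupProg φ ⟨.Q ψ prems tgt ξ, [.E ψ ξ, .G tgt ξ], []⟩
  | totF {ψ prems tgt ξ} : AddrOk φ ξ → QOk φ ψ prems tgt →
      InSoupProg φ ⟨.F, [.Q ψ prems tgt ξ], [.Y ψ prems tgt ξ, .F]⟩
  | totY {i ψ prems tgt ξ η} : AddrOk φ ξ → AddrOk φ η → QOk φ ψ prems tgt →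
      i < prems.length →
      InSoupProg φ ⟨.Y ψ prems tgt ξ, [.A i ψ prems tgt ξ η], []⟩
  | uniqG {a b ξ} : AddrOk φ ξ → a ≠ b →
      InSoupProg φ ⟨.F, [.G a ξ, .G b ξ], [.F]⟩

/-- The constructed program as a set of clauses. -/
def SoupProg (φ : Form) : Set (ASP.GClause PAt) := {c | InSoupProg φ c}

end MFOL

namespace MFOL

/-- The triple giving question data ψ, prems, tgt is a question asked at the
judgment addressed ξ (under the addressing J). -/
def IsQuestionAt (φ : Form) (J : Addr → Set Form × Form) (ψ : Form)
    (prems : List Form) (tgt : Form) (ξ : Addr) : Prop :=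
  ψ ∈ Insts φ ∧ ψ ∈ (J ξ).1 ∧ Unfolds ψ prems tgt ∧ (J ξ).2 = tgt

/-- The judgment addressed η is an i-th answer to a question with premises
`prems` asked at the judgment addressed ξ. -/
def AnswersAt (J : Addr → Set Form × Form) (ξ : Addr) (prems : List Form)
    (i : ℕ) (η : Addr) : Prop :=
  ∃ σ, prems[i]? = some σ ∧ (J η).2 = targetOf σ ∧
    (J ξ).1 ∪ {τ | τ ∈ premsOf σ} ⊆ (J η).1

/-- The model constructed from an addressed soup: goal, environment, question,
answer and Y atoms selected according to the soup structure; F not selected. -/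
def ModelOf (φ : Form) (J : Addr → Set Form × Form) : Set PAt :=
  {x | ∃ ξ, AddrOk φ ξ ∧ (
    (∃ a, (J ξ).2 = a ∧ x = .G a ξ) ∨
    (∃ ψ, ψ ∈ Insts φ ∧ ψ ∈ (J ξ).1 ∧ x = .E ψ ξ) ∨
    (∃ ψ, ψ ∈ Insts φ ∧ ψ ∉ (J ξ).1 ∧ x = .Ebar ψ ξ) ∨
    (∃ ψ prems tgt, IsQuestionAt φ J ψ prems tgt ξ ∧ x = .Q ψ prems tgt ξ) ∨
    (∃ i ψ prems tgt η, AddrOk φ η ∧ IsQuestionAt φ J ψ prems tgt ξ ∧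
      AnswersAt J ξ prems i η ∧ x = .A i ψ prems tgt ξ η) ∨
    (∃ i ψ prems tgt η, AddrOk φ η ∧ i < prems.length ∧
      IsQuestionAt φ J ψ prems tgt ξ ∧ ¬ AnswersAt J ξ prems i η ∧
      x = .Abar i ψ prems tgt ξ η) ∨
    (∃ ψ prems tgt, IsQuestionAt φ J ψ prems tgt ξ ∧
      (∃ i η, AddrOk φ η ∧ AnswersAt J ξ prems i η) ∧ x = .Y ψ prems tgt ξ))}

end MFOL


namespace ASP

variable {α : Type}

def ReductClosed (P : Set (GClause α)) (M S : Set α) : Prop :=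
  ∀ c ∈ P, (∀ b ∈ c.pos, b ∈ S) → (∀ b ∈ c.neg, b ∉ M) → c.head ∈ S

variable {P : Set (GClause α)} {M : Set α}

theorem reductClosed_interp : ReductClosed P M (interp P M) := by
  intro c hc hpos hneg
  rw [interp, ← OrderHom.map_lfp]
  exact Or.inr ⟨c, hc, rfl, hpos, hneg⟩

theorem interp_subset_of_reductClosed {S : Set α} (hS : ReductClosed P M S) :
    interp P M ⊆ S :=
  OrderHom.lfp_le _ fun _ ha =>
    ha.elim id fun ⟨c, hc, hhead, hpos, hneg⟩ => hhead ▸ hS c hc hpos hneg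

theorem isStable_of_reductClosed_of_subset (hclosed : ReductClosed P M M)
    (hsupp : M ⊆ interp P M) : IsStable P M :=
  hsupp.antisymm (interp_subset_of_reductClosed hclosed)

end ASP

namespace MFOL

def IsAnswerDepth (φ : Form) (J : Addr → Set Form × Form) (d : Addr → ℕ) : Prop :=
  ∀ ξ, AddrOk φ ξ → ξ ≠ addr0 φ →
    ∃ ζ ψ prems tgt i, AddrOk φ ζ ∧ d ζ < d ξ ∧
      IsQuestionAt φ J ψ prems tgt ζ ∧ AnswersAt J ζ prems i ξ

variable {φ : Form} {J : Addr → Set Form × Form}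

theorem addrOk_addr0 : AddrOk φ (addr0 φ) := List.length_replicate

theorem AnswersAt.lt_length {ξ η : Addr} {prems : List Form} {i : ℕ}
    (h : AnswersAt J ξ prems i η) : i < prems.length :=
  let ⟨_, hget, _⟩ := h
  (List.getElem?_eq_some_iff.mp hget).1

theorem AnswersAt.of_getElem? {ξ η : Addr} {prems : List Form} {i : ℕ} {σ : Form}
    (h : AnswersAt J ξ prems i η) (hσ : prems[i]? = some σ) :
    (J η).2 = targetOf σ ∧ (J ξ).1 ∪ {τ | τ ∈ premsOf σ} ⊆ (J η).1 := by
  obtain ⟨σ', hσ', h⟩ := h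
  obtain rfl : σ' = σ := Option.some.inj (hσ'.symm.trans hσ)
  exact h

@[simp] theorem G_mem_modelOf {a ξ} :
    PAt.G a ξ ∈ ModelOf φ J ↔ AddrOk φ ξ ∧ (J ξ).2 = a := by
  simp [ModelOf, eq_comm]

@[simp] theorem E_mem_modelOf {ψ ξ} :
    PAt.E ψ ξ ∈ ModelOf φ J ↔ AddrOk φ ξ ∧ ψ ∈ Insts φ ∧ ψ ∈ (J ξ).1 := by
  simp [ModelOf]

@[simp] theorem Ebar_mem_modelOf {ψ ξ} :
    PAt.Ebar ψ ξ ∈ ModelOf φ J ↔ AddrOk φ ξ ∧ ψ ∈ Insts φ ∧ ψ ∉ (J ξ).1 := by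
  simp [ModelOf]

@[simp] theorem Q_mem_modelOf {ψ prems tgt ξ} :
    PAt.Q ψ prems tgt ξ ∈ ModelOf φ J ↔ AddrOk φ ξ ∧ IsQuestionAt φ J ψ prems tgt ξ := by
  simp [ModelOf]

@[simp] theorem A_mem_modelOf {i ψ prems tgt ξ η} :
    PAt.A i ψ prems tgt ξ η ∈ ModelOf φ J ↔
      AddrOk φ ξ ∧ AddrOk φ η ∧ IsQuestionAt φ J ψ prems tgt ξ ∧ AnswersAt J ξ prems i η := by
  simp [ModelOf]

@[simp] theorem Abar_mem_modelOf {i ψ prems tgt ξ η} :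
    PAt.Abar i ψ prems tgt ξ η ∈ ModelOf φ J ↔
      AddrOk φ ξ ∧ AddrOk φ η ∧ i < prems.length ∧ IsQuestionAt φ J ψ prems tgt ξ ∧
        ¬ AnswersAt J ξ prems i η := by
  simp [ModelOf]

@[simp] theorem Y_mem_modelOf {ψ prems tgt ξ} :
    PAt.Y ψ prems tgt ξ ∈ ModelOf φ J ↔
      AddrOk φ ξ ∧ IsQuestionAt φ J ψ prems tgt ξ ∧ ∃ i η, AddrOk φ η ∧ AnswersAt J ξ prems i η := by
  simp [ModelOf]

theorem answersAt_of_isQuestionAt {Z : Set (Set Form × Form)} (hZ : IsSoup φ Z)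
    (hJZ : ∀ ξ, AddrOk φ ξ → J ξ ∈ Z) (hZJ : ∀ z ∈ Z, ∃ ξ, AddrOk φ ξ ∧ J ξ = z)
    {ψ prems tgt ξ} (hξ : AddrOk φ ξ) (hq : IsQuestionAt φ J ψ prems tgt ξ) :
    ∃ i η, AddrOk φ η ∧ AnswersAt J ξ prems i η := by
  obtain ⟨-, hψ, hunf, htgt⟩ := hq
  obtain ⟨σ, hσ, z, hz, hz2, hz1⟩ := hZ.2.2 (J ξ) (hJZ ξ hξ) ψ hψ prems (htgt ▸ hunf)
  obtain ⟨η, hη, rfl⟩ := hZJ z hz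
  obtain ⟨i, hi⟩ := List.mem_iff_getElem?.mp hσ
  exact ⟨i, η, hη, σ, hi, hz2, hz1⟩

theorem reductClosed_modelOf {Z : Set (Set Form × Form)} (hZ : IsSoup φ Z)
    (hJ0 : J (addr0 φ) = ({τ | τ ∈ premsOf φ}, targetOf φ))
    (hJZ : ∀ ξ, AddrOk φ ξ → J ξ ∈ Z) (hZJ : ∀ z ∈ Z, ∃ ξ, AddrOk φ ξ ∧ J ξ = z) :
    ASP.ReductClosed (SoupProg φ) (ModelOf φ J) (ModelOf φ J) := by
  have henv : ∀ ξ, AddrOk φ ξ → (J ξ).1 ⊆ Insts φ := fun ξ hξ => (hZ.2.1 _ (hJZ ξ hξ)).1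
  intro c hc hpos hneg
  cases hc <;>
    simp only [List.forall_mem_cons, List.not_mem_nil, IsEmpty.forall_iff, implies_true, and_true,
      G_mem_modelOf, E_mem_modelOf, Ebar_mem_modelOf, Q_mem_modelOf, A_mem_modelOf,
      Abar_mem_modelOf, Y_mem_modelOf] at hpos hneg ⊢
  case initG => exact ⟨addrOk_addr0, by rw [hJ0]⟩
  case initE ψ hψ =>
    have hψ0 : ψ ∈ (J (addr0 φ)).1 := by rw [hJ0]; exact hψ
    exact ⟨addrOk_addr0, henv _ addrOk_addr0 hψ0, hψ0⟩
  case initEbar _ hψ hnot => exact ⟨addrOk_addr0, hψ, by rw [hJ0]; exact hnot⟩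
  case propE _ _ _ _ _ _ _ _ hη _ hτ =>
    obtain ⟨⟨-, -, -, _, -, -, hsub⟩, -, -, hτξ⟩ := hpos
    exact ⟨hη, hτ, hsub (Or.inl hτξ)⟩
  case propD _ _ _ _ _ η _ _ _ hη _ hget hτ =>
    have hτη := (hpos.2.2.2.of_getElem? hget).2 (Or.inr hτ)
    exact ⟨hη, henv η hη hτη, hτη⟩
  case propG _ _ _ _ _ _ _ _ hη _ hget => exact ⟨hη, (hpos.2.2.2.of_getElem? hget).1⟩
  case choiceE _ _ hψ hξ => exact ⟨hξ, hψ, not_not.mp fun h => hneg ⟨hξ, hψ, h⟩⟩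
  case choiceEbar _ _ hψ hξ => exact ⟨hξ, hψ, fun h => hneg ⟨hξ, hψ, h⟩⟩
  case conflE => exact absurd hpos.1.2.2 hpos.2.2.2
  case choiceA _ _ _ _ _ _ hξ hη _ hlen =>
    exact ⟨hξ, hη, hpos.2, not_not.mp fun h => hneg ⟨hξ, hη, hlen, hpos.2, h⟩⟩
  case choiceAbar _ _ _ _ _ _ hξ hη _ hlen =>
    exact ⟨hξ, hη, hlen, hpos.2, fun h => hneg ⟨hξ, hη, hpos.2, h⟩⟩
  case quest _ _ _ _ hξ hqok =>
    obtain ⟨⟨-, hψ, hψξ⟩, -, htgt⟩ := hpos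
    exact ⟨hξ, hψ, hψξ, hqok.2, htgt⟩
  case totF _ _ _ _ hξ _ =>
    exact (hneg.1 ⟨hξ, hpos.2, answersAt_of_isQuestionAt hZ hJZ hZJ hξ hpos.2⟩).elim
  case totY i _ _ _ _ η hξ hη _ _ => exact ⟨hξ, hpos.2.2.1, i, η, hη, hpos.2.2.2⟩
  case uniqG _ _ _ _ hne => exact (hne (hpos.1.2.symm.trans hpos.2.2)).elim

section Derivability

open ASP

theorem IsQuestionAt.qOk {ψ prems tgt ξ} (hq : IsQuestionAt φ J ψ prems tgt ξ) :
    QOk φ ψ prems tgt :=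
  ⟨hq.1, hq.2.2.1⟩

theorem E_mem_interp {ψ ξ} (hξ : AddrOk φ ξ) (hψ : ψ ∈ Insts φ) (hψξ : ψ ∈ (J ξ).1) :
    PAt.E ψ ξ ∈ interp (SoupProg φ) (ModelOf φ J) :=
  reductClosed_interp (P := SoupProg φ) _ (.choiceE hψ hξ) (by simp) (by simp [hψξ])

theorem Ebar_mem_interp {ψ ξ} (hξ : AddrOk φ ξ) (hψ : ψ ∈ Insts φ) (hψξ : ψ ∉ (J ξ).1) :
    PAt.Ebar ψ ξ ∈ interp (SoupProg φ) (ModelOf φ J) :=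
  reductClosed_interp (P := SoupProg φ) _ (.choiceEbar hψ hξ) (by simp) (by simp [hψξ])

theorem Q_mem_interp {ψ prems tgt ξ} (hξ : AddrOk φ ξ) (hq : IsQuestionAt φ J ψ prems tgt ξ)
    (hG : PAt.G (J ξ).2 ξ ∈ interp (SoupProg φ) (ModelOf φ J)) :
    PAt.Q ψ prems tgt ξ ∈ interp (SoupProg φ) (ModelOf φ J) := by
  have hE := E_mem_interp hξ hq.1 hq.2.1
  rw [hq.2.2.2] at hG
  exact reductClosed_interp (P := SoupProg φ) _ (.quest hξ hq.qOk) (by simp [hE, hG]) (by simp)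

theorem A_mem_interp {i ψ prems tgt ξ η} (hξ : AddrOk φ ξ) (hη : AddrOk φ η)
    (hq : IsQuestionAt φ J ψ prems tgt ξ) (hans : AnswersAt J ξ prems i η)
    (hG : PAt.G (J ξ).2 ξ ∈ interp (SoupProg φ) (ModelOf φ J)) :
    PAt.A i ψ prems tgt ξ η ∈ interp (SoupProg φ) (ModelOf φ J) :=
  reductClosed_interp (P := SoupProg φ) _ (.choiceA hξ hη hq.qOk hans.lt_length)
    (by simp [Q_mem_interp hξ hq hG]) (by simp [hans])

theorem Abar_mem_interp {i ψ prems tgt ξ η} (hξ : AddrOk φ ξ) (hη : AddrOk φ η)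
    (hlen : i < prems.length) (hq : IsQuestionAt φ J ψ prems tgt ξ)
    (hans : ¬ AnswersAt J ξ prems i η)
    (hG : PAt.G (J ξ).2 ξ ∈ interp (SoupProg φ) (ModelOf φ J)) :
    PAt.Abar i ψ prems tgt ξ η ∈ interp (SoupProg φ) (ModelOf φ J) :=
  reductClosed_interp (P := SoupProg φ) _ (.choiceAbar hξ hη hq.qOk hlen)
    (by simp [Q_mem_interp hξ hq hG]) (by simp [hans])

theorem Y_mem_interp {i ψ prems tgt ξ η} (hξ : AddrOk φ ξ) (hη : AddrOk φ η)
    (hq : IsQuestionAt φ J ψ prems tgt ξ) (hans : AnswersAt J ξ prems i η)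
    (hG : PAt.G (J ξ).2 ξ ∈ interp (SoupProg φ) (ModelOf φ J)) :
    PAt.Y ψ prems tgt ξ ∈ interp (SoupProg φ) (ModelOf φ J) :=
  reductClosed_interp (P := SoupProg φ) _ (.totY hξ hη hq.qOk hans.lt_length)
    (by simp [A_mem_interp hξ hη hq hans hG]) (by simp)

theorem G_mem_interp (hJ0 : J (addr0 φ) = ({τ | τ ∈ premsOf φ}, targetOf φ))
    {d : Addr → ℕ} (hd : IsAnswerDepth φ J d) (ξ : Addr) (hξ : AddrOk φ ξ) :
    PAt.G (J ξ).2 ξ ∈ interp (SoupProg φ) (ModelOf φ J) := by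
  induction ξ using (measure d).wf.induction with
  | h ξ ih =>
    by_cases h0 : ξ = addr0 φ
    · subst h0
      rw [hJ0]
      exact reductClosed_interp (P := SoupProg φ) _ .initG (by simp) (by simp)
    · obtain ⟨ζ, ψ, prems, tgt, i, hζ, hdζ, hq, hans⟩ := hd ξ hξ h0
      have hA := A_mem_interp hζ hξ hq hans (ih ζ hdζ hζ)
      obtain ⟨σ, hget, htgt, -⟩ := hans
      rw [htgt]
      exact reductClosed_interp (P := SoupProg φ) _ (.propG hζ hξ hq.qOk hget)
        (by simp [hA]) (by simp)

theorem modelOf_subset_interp (hJ0 : J (addr0 φ) = ({τ | τ ∈ premsOf φ}, targetOf φ))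
    {d : Addr → ℕ} (hd : IsAnswerDepth φ J d) :
    ModelOf φ J ⊆ interp (SoupProg φ) (ModelOf φ J) := by
  rintro x ⟨ξ, hξ, hx⟩
  have hG := G_mem_interp hJ0 hd ξ hξ
  rcases hx with ⟨a, rfl, rfl⟩ | ⟨ψ, hψ, hψξ, rfl⟩ | ⟨ψ, hψ, hψξ, rfl⟩ | ⟨ψ, prems, tgt, hq, rfl⟩ |
    ⟨i, ψ, prems, tgt, η, hη, hq, hans, rfl⟩ | ⟨i, ψ, prems, tgt, η, hη, hlen, hq, hans, rfl⟩ |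
    ⟨ψ, prems, tgt, hq, ⟨i, η, hη, hans⟩, rfl⟩
  · exact hG
  · exact E_mem_interp hξ hψ hψξ
  · exact Ebar_mem_interp hξ hψ hψξ
  · exact Q_mem_interp hξ hq hG
  · exact A_mem_interp hξ hη hq hans hG
  · exact Abar_mem_interp hξ hη hlen hq hans hG
  · exact Y_mem_interp hξ hη hq hans hG

end Derivability

end MFOL

/-- Given a refutation soup Z for φ in which every non-initial judgment answers
some question asked in Z (witnessed by the depth function d), together with an
addressing J of Z, the model constructed from Z is a stable model of the
program. -/
theorem stmt18 (φ : MFOL.Form) (hφ : MFOL.IsSigma1 φ)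
    (Z : Set (Set MFOL.Form × MFOL.Form)) (hZ : MFOL.IsSoup φ Z)
    (J : MFOL.Addr → Set MFOL.Form × MFOL.Form)
    (hJ0 : J (MFOL.addr0 φ) = ({τ | τ ∈ MFOL.premsOf φ}, MFOL.targetOf φ))
    (hJZ : ∀ ξ, MFOL.AddrOk φ ξ → J ξ ∈ Z)
    (hZJ : ∀ z ∈ Z, ∃ ξ, MFOL.AddrOk φ ξ ∧ J ξ = z)
    (d : MFOL.Addr → ℕ) (hd0 : d (MFOL.addr0 φ) = 0)
    (hd : ∀ ξ, MFOL.AddrOk φ ξ → ξ ≠ MFOL.addr0 φ →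
      ∃ ζ ψ prems tgt i, MFOL.AddrOk φ ζ ∧ d ζ < d ξ ∧
        MFOL.IsQuestionAt φ J ψ prems tgt ζ ∧ MFOL.AnswersAt J ζ prems i ξ) :
    ASP.IsStable (MFOL.SoupProg φ) (MFOL.ModelOf φ J) :=
  ASP.isStable_of_reductClosed_of_subset (MFOL.reductClosed_modelOf hZ hJ0 hJZ hZJ)
    (MFOL.modelOf_subset_interp hJ0 hd)
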